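/- Let n ≥ 4 and let λ₁ > λ₂ > 0 be real numbers with λ₃ = 0 (the planar asymmetric top case). Then a matrix K in SO(n−1) satisfies ∃ Q ∈ SO(3) with Q Λ Kᵀ = Λ if and only if K is block diagonal of the form K = diag(A, B), where A is a 2 × 2 diagonal matrix with diagonal entries ±1 occupying the upper-left 2 × 2 block, B is an (n−3) × (n−3) real orthogonal matrix occupying the lower-right block, det A · det B = 1, and all off-diagonal blocks are zero. -/

import Mathlib

/-!
If `Q Λ Kᵀ = Λ` with `Q` and `K` orthogonal, then `Kᵀ (Λᵀ Λ) K = Λᵀ Qᵀ Q Λ = Λᵀ Λ`, so `K`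
commutes with `Λᵀ Λ = diag(λ₁², λ₂², 0, …, 0)`. As `λ₁²`, `λ₂²` and `0` are pairwise distinct,
every entry `K i j` with distinct weights vanishes: `K = diag(A, B)` with `A` diagonal, and
orthogonality of `K` forces `A = diag(±1, ±1)` and `B ∈ O(n - 3)`. Conversely, for such `K`
the rotation `Q = diag(a₁, a₂, a₁ a₂)` satisfies `Q Λ = Λ K`.
-/

/-- The `3 × (n-1)` matrix `Λ` with `Λ₁₁ = λ₁`, `Λ₂₂ = λ₂`, `Λ₃₃ = λ₃` and all other
entries zero. -/
def Lam (n : ℕ) (l1 l2 l3 : ℝ) : Matrix (Fin 3) (Fin (n - 1)) ℝ :=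
  Matrix.of fun i j => if (j : ℕ) = (i : ℕ) then ![l1, l2, l3] i else 0

/-- The `n × n` block diagonal matrix `diag(A, B)` built from an `a × a` block `A` and a
`b × b` block `B`, where `a + b = n`. -/
def embedBlocks {a b n : ℕ} (h : a + b = n) (A : Matrix (Fin a) (Fin a) ℝ)
    (B : Matrix (Fin b) (Fin b) ℝ) : Matrix (Fin n) (Fin n) ℝ :=
  Matrix.reindex (finSumFinEquiv.trans (finCongr h)) (finSumFinEquiv.trans (finCongr h))
    (Matrix.fromBlocks A 0 0 B)

namespace Matrix

theorem mul_eq_mul_iff_submatrix {α β κ R : Type*} [Fintype α] [Fintype β] [Fintype κ]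
    [CommRing R] (e : α ≃ β) {Q : Matrix κ κ R} {Λ : Matrix κ β R} {K : Matrix β β R} :
    Q * Λ = Λ * K ↔ Q * Λ.submatrix id e = Λ.submatrix id e * K.submatrix e e := by
  have hQ : Q * Λ.submatrix id e = (Q * Λ).submatrix id e := by
    simpa using (submatrix_mul Q Λ id id e Function.bijective_id).symm
  rw [hQ, submatrix_mul_equiv]
  refine ⟨fun h => by rw [h], fun h => ?_⟩
  ext i j
  simpa using congr_fun₂ h i (e.symm j)

variable {ι κ R : Type*} [Fintype ι] [DecidableEq ι]

theorem apply_eq_zero_of_commute_diagonal [CommRing R] [NoZeroDivisors R]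
    {K : Matrix ι ι R} {d : ι → R} (hK : Commute K (diagonal d)) {i j : ι} (hd : d i ≠ d j) :
    K i j = 0 := by
  have h := congr_fun₂ hK.eq i j
  rw [mul_diagonal, diagonal_mul] at h
  exact (mul_eq_zero.mp (by linear_combination h : K i j * (d j - d i) = 0)).resolve_right
    (sub_ne_zero.mpr hd.symm)

theorem mul_transpose_eq_iff_eq_mul [CommRing R] {X Y : Matrix κ ι R} {K : Matrix ι ι R}
    (hK : Kᵀ * K = 1) : X * Kᵀ = Y ↔ X = Y * K := by
  constructor
  · rintro rfl
    rw [Matrix.mul_assoc, hK, Matrix.mul_one]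
  · rintro rfl
    rw [Matrix.mul_assoc, mul_eq_one_comm.mp hK, Matrix.mul_one]

theorem commute_transpose_mul_self_of_mul_eq [CommRing R] [Fintype κ] [DecidableEq κ]
    {Λ : Matrix κ ι R} {Q : Matrix κ κ R} {K : Matrix ι ι R} (hQ : Qᵀ * Q = 1) (hK : Kᵀ * K = 1)
    (h : Q * Λ = Λ * K) : Commute K (Λᵀ * Λ) := by
  have hconj : Kᵀ * (Λᵀ * Λ) * K = Λᵀ * Λ := by
    calc Kᵀ * (Λᵀ * Λ) * K = (Λ * K)ᵀ * (Λ * K) := by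
          simp only [transpose_mul, Matrix.mul_assoc]
      _ = Λᵀ * (Qᵀ * Q) * Λ := by rw [← h, transpose_mul]; simp only [Matrix.mul_assoc]
      _ = Λᵀ * Λ := by rw [hQ, Matrix.mul_one]
  calc K * (Λᵀ * Λ) = K * (Kᵀ * (Λᵀ * Λ) * K) := by rw [hconj]
    _ = Λᵀ * Λ * K := by
      rw [← Matrix.mul_assoc, ← Matrix.mul_assoc, ← Matrix.mul_assoc, mul_eq_one_comm.mp hK,
        Matrix.one_mul]

theorem apply_self_eq_one_or_neg_one [CommRing R] [NoZeroDivisors R] {A : Matrix ι ι R}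
    (hA : Aᵀ * A = 1) (hdiag : ∀ i j, i ≠ j → A i j = 0) (i : ι) :
    A i i = 1 ∨ A i i = -1 := by
  have h := congr_fun₂ hA i i
  rw [mul_apply, Finset.sum_eq_single i (fun k _ hk => by simp [hdiag k i hk]) (by simp),
    one_apply_eq, transpose_apply] at h
  exact mul_self_eq_one_iff.mp h

theorem fromBlocks_transpose_mul_self_eq_one_iff [CommRing R] [Fintype κ] [DecidableEq κ]
    {A : Matrix ι ι R} {B : Matrix κ κ R} :
    (fromBlocks A 0 0 B)ᵀ * fromBlocks A 0 0 B = 1 ↔ Aᵀ * A = 1 ∧ Bᵀ * B = 1 := by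
  rw [fromBlocks_transpose, fromBlocks_multiply, ← fromBlocks_one, fromBlocks_inj]
  simp

end Matrix

open Matrix

/-- `Λ` for `λ₃ = 0`, with its columns split as `Fin 2 ⊕ ι`: only the first block is nonzero. -/
def lamBlock (ι : Type*) (l1 l2 : ℝ) : Matrix (Fin 3) (Fin 2 ⊕ ι) ℝ :=
  fromCols !![l1, 0; 0, l2; 0, 0] 0

theorem Lam_submatrix_finSumFinEquiv {n b : ℕ} (h : 2 + b = n - 1) (l1 l2 : ℝ) :
    (Lam n l1 l2 0).submatrix id (finSumFinEquiv.trans (finCongr h)) =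
      lamBlock (Fin b) l1 l2 := by
  ext i (j | j)
  · fin_cases i <;> fin_cases j <;> simp [Lam, lamBlock]
  · fin_cases i <;> simp [Lam, lamBlock]; omega

theorem lamBlock_transpose_mul_self {ι : Type*} [DecidableEq ι] (l1 l2 : ℝ) :
    (lamBlock ι l1 l2)ᵀ * lamBlock ι l1 l2 =
      diagonal (Sum.elim ![l1 ^ 2, l2 ^ 2] 0) := by
  rw [lamBlock, transpose_fromCols, fromRows_mul_fromCols, ← fromBlocks_diagonal]
  congr
  · ext i j
    fin_cases i <;> fin_cases j <;> simp [sq, mul_apply, Fin.sum_univ_three]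
  all_goals simp

section

variable {ι : Type*} [Fintype ι]

theorem exists_eq_fromBlocks_of_mul_lamBlock_eq [DecidableEq ι] {l1 l2 : ℝ}
    (h12 : l1 ^ 2 ≠ l2 ^ 2) (h1 : l1 ≠ 0) (h2 : l2 ≠ 0) {K : Matrix (Fin 2 ⊕ ι) (Fin 2 ⊕ ι) ℝ}
    (hK : Kᵀ * K = 1 ∧ K.det = 1) {Q : Matrix (Fin 3) (Fin 3) ℝ} (hQ : Qᵀ * Q = 1)
    (hQK : Q * lamBlock ι l1 l2 = lamBlock ι l1 l2 * K) :
    ∃ (A : Matrix (Fin 2) (Fin 2) ℝ) (B : Matrix ι ι ℝ),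
      (∀ i j, i ≠ j → A i j = 0) ∧ (∀ i, A i i = 1 ∨ A i i = -1) ∧
      Bᵀ * B = 1 ∧ A.det * B.det = 1 ∧ K = fromBlocks A 0 0 B := by
  have hc := commute_transpose_mul_self_of_mul_eq hQ hK.1 hQK
  rw [lamBlock_transpose_mul_self] at hc
  have hd : ∀ i : Fin 2, ![l1 ^ 2, l2 ^ 2] i ≠ 0 := by
    intro i; fin_cases i <;> simp [h1, h2]
  have hK₁₂ : K.toBlocks₁₂ = 0 := by
    ext i j; exact apply_eq_zero_of_commute_diagonal hc (by simpa using hd i)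
  have hK₂₁ : K.toBlocks₂₁ = 0 := by
    ext i j; exact apply_eq_zero_of_commute_diagonal hc (by simpa using (hd j).symm)
  have hblocks : K = fromBlocks K.toBlocks₁₁ 0 0 K.toBlocks₂₂ := by
    rw [← hK₁₂, ← hK₂₁, fromBlocks_toBlocks]
  have hA : ∀ i j, i ≠ j → K.toBlocks₁₁ i j = 0 := by
    intro i j hij
    refine apply_eq_zero_of_commute_diagonal hc ?_
    fin_cases i <;> fin_cases j <;> simp [h12, Ne.symm h12] at hij ⊢
  obtain ⟨hAo, hBo⟩ := fromBlocks_transpose_mul_self_eq_one_iff.mp (hblocks ▸ hK.1)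
  refine ⟨_, _, hA, apply_self_eq_one_or_neg_one hAo hA, hBo, ?_, hblocks⟩
  rw [← det_fromBlocks_zero₂₁ _ 0, ← hblocks, hK.2]

theorem exists_mul_lamBlock_eq_lamBlock_mul_fromBlocks (l1 l2 : ℝ)
    {A : Matrix (Fin 2) (Fin 2) ℝ} (hA : ∀ i j, i ≠ j → A i j = 0)
    (hA' : ∀ i, A i i = 1 ∨ A i i = -1) (B : Matrix ι ι ℝ) :
    ∃ Q : Matrix (Fin 3) (Fin 3) ℝ, (Qᵀ * Q = 1 ∧ Q.det = 1) ∧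
      Q * lamBlock ι l1 l2 = lamBlock ι l1 l2 * fromBlocks A 0 0 B := by
  have hsq : ∀ i, A i i * A i i = 1 := fun i => mul_self_eq_one_iff.mpr (hA' i)
  refine ⟨diagonal ![A 0 0, A 1 1, A 0 0 * A 1 1], ⟨?_, ?_⟩, ?_⟩
  · rw [diagonal_transpose, diagonal_mul_diagonal, ← diagonal_one]
    congr 1
    ext i; fin_cases i <;> simp [hsq, mul_mul_mul_comm (A 0 0)]
  · simp [det_diagonal, Fin.prod_univ_three, mul_mul_mul_comm (A 0 0), hsq]
  · simp only [lamBlock, mul_fromCols, fromCols_mul_fromBlocks, Matrix.mul_zero, Matrix.zero_mul,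
      add_zero]
    congr 1
    ext i j
    rw [diagonal_mul, mul_apply, Fin.sum_univ_two]
    fin_cases i <;> fin_cases j <;> simp [hA 0 1, hA 1 0, mul_comm]

theorem exists_orthogonal_mul_lamBlock_iff [DecidableEq ι] {l1 l2 : ℝ}
    (h12 : l1 ^ 2 ≠ l2 ^ 2) (h1 : l1 ≠ 0) (h2 : l2 ≠ 0) {K : Matrix (Fin 2 ⊕ ι) (Fin 2 ⊕ ι) ℝ}
    (hK : Kᵀ * K = 1 ∧ K.det = 1) :
    (∃ Q : Matrix (Fin 3) (Fin 3) ℝ, (Qᵀ * Q = 1 ∧ Q.det = 1) ∧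
      Q * lamBlock ι l1 l2 = lamBlock ι l1 l2 * K) ↔
    ∃ (A : Matrix (Fin 2) (Fin 2) ℝ) (B : Matrix ι ι ℝ),
      (∀ i j, i ≠ j → A i j = 0) ∧ (∀ i, A i i = 1 ∨ A i i = -1) ∧
      Bᵀ * B = 1 ∧ A.det * B.det = 1 ∧ K = fromBlocks A 0 0 B := by
  constructor
  · rintro ⟨Q, ⟨hQ, -⟩, hQK⟩
    exact exists_eq_fromBlocks_of_mul_lamBlock_eq h12 h1 h2 hK hQ hQK
  · rintro ⟨A, B, hA, hA', -, -, rfl⟩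
    exact exists_mul_lamBlock_eq_lamBlock_mul_fromBlocks l1 l2 hA hA' B

end

/-- Planar asymmetric top case: for `n ≥ 4`, `λ₁ > λ₂ > 0` and `λ₃ = 0`, a matrix
`K ∈ SO(n-1)` satisfies `∃ Q ∈ SO(3), Q Λ Kᵀ = Λ` iff `K = diag(A, B)` with `A` a `2 × 2`
diagonal matrix with entries `±1`, `B ∈ O(n-3)`, and `det A · det B = 1`. -/
theorem stmt_8 (n : ℕ) (hn : 4 ≤ n) (l1 l2 : ℝ)
    (h12 : l2 < l1) (h2 : 0 < l2)
    (K : Matrix (Fin (n - 1)) (Fin (n - 1)) ℝ)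
    (hK : K.transpose * K = 1 ∧ K.det = 1) :
    (∃ Q : Matrix (Fin 3) (Fin 3) ℝ,
        (Q.transpose * Q = 1 ∧ Q.det = 1) ∧
        Q * Lam n l1 l2 0 * K.transpose = Lam n l1 l2 0) ↔
      ∃ (A : Matrix (Fin 2) (Fin 2) ℝ) (B : Matrix (Fin (n - 3)) (Fin (n - 3)) ℝ),
        (∀ i j, i ≠ j → A i j = 0) ∧ (∀ i, A i i = 1 ∨ A i i = -1) ∧
        B.transpose * B = 1 ∧
        A.det * B.det = 1 ∧
        K = embedBlocks (by omega : 2 + (n - 3) = n - 1) A B := by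
  have h : 2 + (n - 3) = n - 1 := by omega
  set e := finSumFinEquiv.trans (finCongr h)
  have hK' : (K.submatrix e e)ᵀ * K.submatrix e e = 1 ∧ (K.submatrix e e).det = 1 := by
    rw [transpose_submatrix, submatrix_mul_equiv, hK.1, submatrix_one_equiv,
      det_submatrix_equiv_self, hK.2]
    simp
  calc (∃ Q : Matrix (Fin 3) (Fin 3) ℝ, (Qᵀ * Q = 1 ∧ Q.det = 1) ∧
          Q * Lam n l1 l2 0 * Kᵀ = Lam n l1 l2 0) ↔
        ∃ Q : Matrix (Fin 3) (Fin 3) ℝ, (Qᵀ * Q = 1 ∧ Q.det = 1) ∧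
          Q * lamBlock _ l1 l2 = lamBlock _ l1 l2 * K.submatrix e e := by
        refine exists_congr fun Q => and_congr_right fun _ => ?_
        rw [mul_transpose_eq_iff_eq_mul hK.1, mul_eq_mul_iff_submatrix e,
          Lam_submatrix_finSumFinEquiv h]
    _ ↔ _ := exists_orthogonal_mul_lamBlock_iff (by nlinarith) (h2.trans h12).ne' h2.ne' hK'
    _ ↔ _ := by
        have hembed : ∀ A B, K = embedBlocks h A B ↔ K.submatrix e e = fromBlocks A 0 0 B :=
          fun A B => (reindex e e).symm_apply_eq.symm
        simp only [hembed]
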